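/- Let L be a Lindblad generator on Mₙ(ℂ) in standard form with jump map Ψ_L, and let ρ be a density matrix such that Tr(Ψ_L(Iₙ)ρ) > 0 and Tr(Ψ_L(Ψ_L(Iₙ))ρ) > 0 (so that g²_L(0) = Tr(Ψ_L(Ψ_L(Iₙ))ρ) / Tr(Ψ_L(Iₙ)ρ)² is defined and positive). Then for every ε > 0 there exists δ = δ(ε, L, ρ) > 0 such that for every Lindblad generator L' in standard form with jump map Ψ_{L'} and ‖L − L'‖_{2→2} ≤ δ, the second-order correlation function g²_{L'}(0) = Tr(Ψ_{L'}(Ψ_{L'}(Iₙ))ρ) / Tr(Ψ_{L'}(Iₙ)ρ)² satisfies (1−ε) g²_L(0) ≤ g²_{L'}(0) ≤ (1+ε) g²_L(0). -/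

import Mathlib

open Matrix
open scoped ComplexOrder Kronecker

/-- `n × n` complex matrices. -/
abbrev Mat (n : ℕ) := Matrix (Fin n) (Fin n) ℂ

/-- The gradient form (carré du champ) of a map `L`:
`Γ_L(x,y) = L(x*y) − L(x*)y − x*L(y)`. -/
noncomputable def gradForm {n : ℕ} (L : Mat n → Mat n) (x y : Mat n) : Mat n :=
  L (xᴴ * y) - L xᴴ * y - xᴴ * L y

/-- The amplification `id_{M_m} ⊗ L` acting on `M_m(Mₙ(ℂ))`,
realized on matrices indexed by `Fin m × Fin n`. -/
noncomputable def amp {n : ℕ} (m : ℕ) (L : Mat n → Mat n)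
    (X : Matrix (Fin m × Fin n) (Fin m × Fin n) ℂ) :
    Matrix (Fin m × Fin n) (Fin m × Fin n) ℂ :=
  Matrix.of fun p q => L (Matrix.of fun a b => X (p.1, a) (q.1, b)) p.2 q.2

/-- The amplified gradient form `Γ_{id_{M_m} ⊗ L}`. -/
noncomputable def gradFormAmp {n : ℕ} (m : ℕ) (L : Mat n → Mat n)
    (X Y : Matrix (Fin m × Fin n) (Fin m × Fin n) ℂ) :
    Matrix (Fin m × Fin n) (Fin m × Fin n) ℂ :=
  amp m L (Xᴴ * Y) - amp m L Xᴴ * Y - Xᴴ * amp m L Y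

/-- Complete positivity of the gradient form of `L`. -/
def GradCP {n : ℕ} (L : Mat n → Mat n) : Prop :=
  ∀ (m : ℕ) (X : Matrix (Fin m × Fin n) (Fin m × Fin n) ℂ),
    (gradFormAmp m L X X).PosSemidef

/-- The Lindblad generator with Hamiltonian `H` and jump operators `V`:
`L(x) = i[H,x] + Σ_j (V_j* x V_j − ½(V_j*V_j x + x V_j*V_j))`. -/
noncomputable def lindbladOf {n : ℕ} (H : Mat n) {m : ℕ} (V : Fin m → Mat n) :
    Mat n → Mat n :=
  fun x => Complex.I • (H * x - x * H) +
    ∑ i, ((V i)ᴴ * x * V i -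
      (2⁻¹ : ℂ) • ((V i)ᴴ * V i * x + x * ((V i)ᴴ * V i)))

/-- `L` is a Lindblad generator. -/
def IsLindblad {n : ℕ} (L : Mat n → Mat n) : Prop :=
  ∃ (H : Mat n) (m : ℕ) (V : Fin m → Mat n), H.IsHermitian ∧ L = lindbladOf H V

/-- The Hilbert–Schmidt norm of a matrix. -/
noncomputable def hsNorm {n : ℕ} (x : Mat n) : ℝ :=
  Real.sqrt (Matrix.trace (xᴴ * x)).re

/-- The `2 → 2` operator norm of a map on matrices, with respect to the
Hilbert–Schmidt norm. -/
noncomputable def norm22 {n : ℕ} (L : Mat n → Mat n) : ℝ :=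
  sSup {r : ℝ | ∃ x : Mat n, hsNorm x ≤ 1 ∧ r = hsNorm (L x)}

/-- `σ`-detailed balance: `Tr(σ L(x)* y) = Tr(σ x* L(y))` for all `x, y`. -/
def DetailedBalance {n : ℕ} (σ : Mat n) (L : Mat n → Mat n) : Prop :=
  ∀ x y : Mat n, Matrix.trace (σ * (L x)ᴴ * y) = Matrix.trace (σ * xᴴ * L y)

/-- The jump operators `V` are traceless and orthonormal with respect to the
normalized trace `τ = Tr/n` (standard form). -/
def StdJump {n m : ℕ} (V : Fin m → Mat n) : Prop :=
  (∀ j, Matrix.trace (V j) = 0) ∧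
  ∀ i j, Matrix.trace ((V i)ᴴ * V j) = if i = j then (n : ℂ) else 0

/-- The jump map `Ψ(x) = Σ_j V_j* x V_j`. -/
noncomputable def jumpMap {n m : ℕ} (V : Fin m → Mat n) : Mat n → Mat n :=
  fun x => ∑ j, (V j)ᴴ * x * V j

/-- Complete positivity of a map on `Mₙ(ℂ)`. -/
def IsCPMap {n : ℕ} (Φ : Mat n → Mat n) : Prop :=
  ∀ (m : ℕ) (X : Matrix (Fin m × Fin n) (Fin m × Fin n) ℂ),
    X.PosSemidef → (amp m Φ X).PosSemidef

/-- The Lindblad generator `−(I − E_τ)`, where `E_τ(x) = τ(x)·Iₙ`. -/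
noncomputable def etauGen (n : ℕ) : Mat n → Mat n :=
  fun x => (Matrix.trace x / n) • 1 - x

/-- The gradient matrix `m_L = (Γ_L(e_{rs}, e_{tv}))` of `L`. -/
noncomputable def gradMatrix {n : ℕ} (L : Mat n → Mat n) :
    Matrix ((Fin n × Fin n) × Fin n) ((Fin n × Fin n) × Fin n) ℂ :=
  Matrix.of fun p q =>
    gradForm L (Matrix.single p.1.1 p.1.2 1)
      (Matrix.single q.1.1 q.1.2 1) p.2 q.2

/-- `E` is the trace-preserving conditional expectation onto (the subalgebra) `N`,
i.e. the orthogonal projection onto `N` for the trace inner product. -/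
def IsCondExpTau {n : ℕ} (N : Set (Mat n)) (E : Mat n → Mat n) : Prop :=
  IsLinearMap ℂ E ∧ (∀ x, E x ∈ N) ∧ (∀ x ∈ N, E x = x) ∧
  ∀ x : Mat n, ∀ y ∈ N, Matrix.trace ((x - E x)ᴴ * y) = 0

/-- `E` is the `σ`-preserving (GNS) conditional expectation onto `N`,
i.e. the orthogonal projection onto `N` for the GNS inner product
`⟨x,y⟩ = Tr(σ x* y)`. -/
def IsCondExpGNS {n : ℕ} (σ : Mat n) (N : Set (Mat n)) (E : Mat n → Mat n) : Prop :=
  IsLinearMap ℂ E ∧ (∀ x, E x ∈ N) ∧ (∀ x ∈ N, E x = x) ∧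
  ∀ x : Mat n, ∀ y ∈ N, Matrix.trace (σ * (x - E x)ᴴ * y) = 0

/-- The second-order correlation function
`g²(0) = Tr(Ψ(Ψ(Iₙ))ρ) / Tr(Ψ(Iₙ)ρ)²` of the jump map with jump operators `V`
at the state `ρ`. -/
noncomputable def g2 {n m : ℕ} (V : Fin m → Mat n) (ρ : Mat n) : ℝ :=
  (Matrix.trace (jumpMap V (jumpMap V 1) * ρ)).re /
    ((Matrix.trace (jumpMap V 1 * ρ)).re) ^ 2


/-! ### Auxiliary lemmas -/

section AuxAlgebra

variable {n : ℕ}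

lemma aux_EE_conjT (a b : Fin n) :
    (single a b (1:ℂ))ᴴ = single b a 1 := by
  ext p q
  simp [single, conjTranspose_apply, and_comm]

lemma aux_sum_EE_mul (M : Mat n) (b d : Fin n) :
    ∑ a, single b a (1:ℂ) * M * single a d 1
      = trace M • single b d 1 := by
  ext p q
  rw [Matrix.sum_apply, Matrix.smul_apply]
  by_cases hq : q = d
  · subst hq
    by_cases hp : p = b
    · subst hp
      have : ∀ a : Fin n,
          (single p a (1:ℂ) * M * single a q 1 : Mat n) p q = M a a := by
        intro a
        rw [Matrix.mul_single_apply_same,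
          Matrix.single_mul_apply_same, one_mul, mul_one]
      simp only [this, single_apply_same, mul_one, smul_eq_mul]
      simp [trace, diag]
    · have : ∀ a : Fin n,
          (single b a (1:ℂ) * M * single a q 1 : Mat n) p q = 0 := by
        intro a
        rw [mul_assoc]
        exact Matrix.single_mul_apply_of_ne _ _ _ _ _ hp _
      simp only [this, Finset.sum_const_zero, smul_eq_mul]
      exact (mul_eq_zero.2 (Or.inr
        (single_apply_of_ne _ _ _ _ _ (fun h => hp h.1.symm)))).symm
  · have : ∀ a : Fin n,
        (single b a (1:ℂ) * M * single a d 1 : Mat n) p q = 0 := fun a =>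
      Matrix.mul_single_apply_of_ne _ _ _ _ _ hq _
    simp only [this, Finset.sum_const_zero, smul_eq_mul]
    exact (mul_eq_zero.2 (Or.inr
      (single_apply_of_ne _ _ _ _ _ (fun h => hq h.2.symm)))).symm

lemma aux_sum_comb {m : ℕ} (a1 a2 a3 : Mat n) (f g h r : Fin m → Mat n)
    (h0 : a1 - a2 - a3 = 0) (hj : ∀ j, f j - g j - h j = r j) :
    a1 + ∑ j, f j - (a2 + ∑ j, g j) - (a3 + ∑ j, h j) = ∑ j, r j := by
  calc a1 + ∑ j, f j - (a2 + ∑ j, g j) - (a3 + ∑ j, h j)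
      = (a1 - a2 - a3) + (∑ j, f j - ∑ j, g j - ∑ j, h j) := by abel
    _ = 0 + ∑ j, (f j - g j - h j) := by
        rw [h0, Finset.sum_sub_distrib, Finset.sum_sub_distrib]
    _ = ∑ j, r j := by rw [zero_add]; exact Finset.sum_congr rfl fun j _ => hj j

lemma aux_gradForm_lindblad {m : ℕ} (H : Mat n) (V : Fin m → Mat n) (x y : Mat n) :
    gradForm (lindbladOf H V) x y
      = ∑ j, (V j * x - x * V j)ᴴ * (V j * y - y * V j) := by
  simp only [gradForm, lindbladOf, conjTranspose_sub, conjTranspose_mul, smul_add, smul_sub,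
    sub_mul, mul_sub, add_mul, mul_add, smul_mul_assoc, mul_smul_comm, Finset.sum_mul,
    Finset.mul_sum, mul_assoc]
  exact aux_sum_comb _ _ _ _ _ _ _ (by abel) (fun j => by module)

/-- The key reconstruction data: `Sm L b d = ∑ₐ Γ_L(e_{ab}, e_{ad})`. -/
noncomputable def Sm (L : Mat n → Mat n) (b d : Fin n) : Mat n :=
  ∑ a, gradForm L (single a b 1) (single a d 1)

noncomputable def Gm (L : Mat n → Mat n) : Mat n := ∑ b, Sm L b b

noncomputable def Am (L : Mat n → Mat n) : Mat n :=
  ((n:ℂ))⁻¹ • (Gm L - (Matrix.trace (Gm L) / (2 * (n:ℂ))) • 1)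

noncomputable def Tm (L : Mat n → Mat n) : Mat n :=
  ∑ b, ∑ d, (Am L) b d • Sm L b d

noncomputable def val1 (ρ : Mat n) (L : Mat n → Mat n) : ℂ :=
  Matrix.trace (Am L * ρ)

noncomputable def val2 (ρ : Mat n) (L : Mat n → Mat n) : ℂ :=
  ((n:ℂ))⁻¹ * (Matrix.trace (Tm L * ρ)
    - (Matrix.trace (Gm L) / (2 * (n:ℂ))) * Matrix.trace (Am L * ρ))

lemma aux_innerSumEE (A : Mat n) (b d : Fin n) :
    ∑ a, (A * single a b 1 - single a b 1 * A)ᴴ *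
        (A * single a d 1 - single a d 1 * A)
      = trace (Aᴴ * A) • single b d 1
        - (trace Aᴴ • single b d 1) * A
        - Aᴴ * (trace A • single b d 1)
        + trace (1 : Mat n) • (Aᴴ * single b d 1 * A) := by
  have step : ∀ a : Fin n,
      (A * single a b 1 - single a b 1 * A)ᴴ *
        (A * single a d 1 - single a d 1 * A)
      = single b a 1 * (Aᴴ * A) * single a d 1
        - (single b a 1 * Aᴴ * single a d 1) * A
        - Aᴴ * (single b a 1 * A * single a d 1)
        + Aᴴ * (single b a 1 * 1 * single a d 1) * A := by
    intro a
    rw [conjTranspose_sub, conjTranspose_mul, conjTranspose_mul, aux_EE_conjT]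
    noncomm_ring
  rw [Finset.sum_congr rfl fun a _ => step a]
  simp only [Finset.sum_add_distrib, Finset.sum_sub_distrib, ← Finset.sum_mul,
    ← Finset.mul_sum, aux_sum_EE_mul]
  simp [smul_mul_assoc, mul_smul_comm, mul_assoc]
  have hstd : single b d ((n:ℕ):ℂ) = ((n:ℕ):ℂ) • single b d 1 := by
    rw [Matrix.smul_single, smul_eq_mul, mul_one]
  rw [hstd, smul_mul_assoc, mul_smul_comm]

lemma aux_Sm_lindblad {m : ℕ} (H : Mat n) (V : Fin m → Mat n) (hV : StdJump V)
    (b d : Fin n) :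
    Sm (lindbladOf H V) b d
      = ((n : ℂ) * m) • single b d 1
        + (n : ℂ) • jumpMap V (single b d 1) := by
  unfold Sm
  simp only [aux_gradForm_lindblad]
  rw [Finset.sum_comm]
  have per : ∀ j, ∑ a, (V j * single a b 1 - single a b 1 * V j)ᴴ *
      (V j * single a d 1 - single a d 1 * V j)
      = (n : ℂ) • single b d 1 + (n : ℂ) • ((V j)ᴴ * single b d 1 * V j) := by
    intro j
    rw [aux_innerSumEE]
    rw [hV.2 j j, if_pos rfl, trace_conjTranspose, hV.1 j, trace_one]
    simp [Fintype.card_fin]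
  simp only [per, Finset.sum_add_distrib, Finset.sum_const, Finset.card_univ, Fintype.card_fin,
    jumpMap, Finset.smul_sum]
  congr 1
  rw [← Nat.cast_smul_eq_nsmul ℂ m, smul_smul, mul_comm]

lemma aux_jumpMap_smul {m : ℕ} (V : Fin m → Mat n) (c : ℂ) (x : Mat n) :
    jumpMap V (c • x) = c • jumpMap V x := by
  simp [jumpMap, mul_smul_comm, smul_mul_assoc, Finset.smul_sum]

lemma aux_jumpMap_sum {m : ℕ} (V : Fin m → Mat n) {ι : Type*} (s : Finset ι)
    (f : ι → Mat n) : jumpMap V (∑ i ∈ s, f i) = ∑ i ∈ s, jumpMap V (f i) := by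
  simp only [jumpMap, Finset.mul_sum, Finset.sum_mul]
  rw [Finset.sum_comm]

lemma aux_sum_smul_Sm {m : ℕ} (H : Mat n) (V : Fin m → Mat n) (hV : StdJump V)
    (x : Mat n) :
    ∑ b, ∑ d, x b d • Sm (lindbladOf H V) b d
      = ((n : ℂ) * m) • x + (n : ℂ) • jumpMap V x := by
  have hx : ∑ b, ∑ d, x b d • single b d (1:ℂ) = x := by
    conv_rhs => rw [Matrix.matrix_eq_sum_single x]
    refine Finset.sum_congr rfl fun b _ => Finset.sum_congr rfl fun d _ => ?_
    rw [Matrix.smul_single, smul_eq_mul, mul_one]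
  calc ∑ b, ∑ d, x b d • Sm (lindbladOf H V) b d
      = ∑ b, ∑ d, (((n:ℂ)*m) • (x b d • single b d 1)
          + (n:ℂ) • (x b d • jumpMap V (single b d 1))) := by
        refine Finset.sum_congr rfl fun b _ => Finset.sum_congr rfl fun d _ => ?_
        rw [aux_Sm_lindblad H V hV, smul_add, smul_comm ((n:ℂ)*(m:ℂ)), smul_comm ((n:ℂ))]
    _ = ((n:ℂ)*m) • (∑ b, ∑ d, x b d • single b d 1)
          + (n:ℂ) • (∑ b, ∑ d, x b d • jumpMap V (single b d 1)) := by
        simp only [Finset.sum_add_distrib, Finset.smul_sum]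
    _ = ((n : ℂ) * m) • x + (n : ℂ) • jumpMap V x := by
        rw [hx]
        congr 1
        have hy : ∑ b, ∑ d, x b d • jumpMap V (single b d 1)
            = jumpMap V x := by
          simp only [← aux_jumpMap_smul, ← aux_jumpMap_sum]
          rw [hx]
        rw [hy]

lemma aux_Gm_lindblad {m : ℕ} (H : Mat n) (V : Fin m → Mat n) (hV : StdJump V) :
    Gm (lindbladOf H V) = ((n : ℂ) * m) • 1 + (n : ℂ) • jumpMap V 1 := by
  have h : Gm (lindbladOf H V) = ∑ b, ∑ d, (1 : Mat n) b d • Sm (lindbladOf H V) b d := by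
    refine Finset.sum_congr rfl fun b _ => ?_
    rw [Finset.sum_eq_single b]
    · simp [Matrix.one_apply]
    · intro d _ hd
      simp [Matrix.one_apply, (Ne.symm hd)]
    · simp
  rw [h, aux_sum_smul_Sm H V hV]

lemma aux_trace_jumpMap_one {m : ℕ} (V : Fin m → Mat n) (hV : StdJump V) :
    Matrix.trace (jumpMap V 1) = (n : ℂ) * m := by
  rw [jumpMap, Matrix.trace_sum]
  have h2 : ∀ j : Fin m, ((V j)ᴴ * V j).trace = (n:ℂ) := by
    intro j
    have := hV.2 j j
    rwa [if_pos rfl] at this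
  simp only [mul_one]
  simp [h2, mul_comm]

lemma aux_trace_Gm_lindblad {m : ℕ} (H : Mat n) (V : Fin m → Mat n) (hV : StdJump V) :
    Matrix.trace (Gm (lindbladOf H V)) = 2 * (n:ℂ)^2 * m := by
  rw [aux_Gm_lindblad H V hV, Matrix.trace_add, Matrix.trace_smul, Matrix.trace_smul,
    Matrix.trace_one, aux_trace_jumpMap_one V hV]
  simp only [smul_eq_mul, Fintype.card_fin]
  ring

lemma aux_Am_lindblad {m : ℕ} (hn : (n:ℂ) ≠ 0) (H : Mat n) (V : Fin m → Mat n)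
    (hV : StdJump V) : Am (lindbladOf H V) = jumpMap V 1 := by
  rw [Am, aux_trace_Gm_lindblad H V hV, aux_Gm_lindblad H V hV]
  have hc : 2 * (n:ℂ)^2 * m / (2 * n) = (n:ℂ) * m := by
    field_simp
  rw [hc, add_sub_cancel_left, smul_smul, inv_mul_cancel₀ hn, one_smul]

lemma aux_val1_lindblad {m : ℕ} (hn : (n:ℂ) ≠ 0) (ρ H : Mat n) (V : Fin m → Mat n)
    (hV : StdJump V) :
    val1 ρ (lindbladOf H V) = Matrix.trace (jumpMap V 1 * ρ) := by
  rw [val1, aux_Am_lindblad hn H V hV]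

lemma aux_val2_lindblad {m : ℕ} (hn : (n:ℂ) ≠ 0) (ρ H : Mat n) (V : Fin m → Mat n)
    (hV : StdJump V) :
    val2 ρ (lindbladOf H V) = Matrix.trace (jumpMap V (jumpMap V 1) * ρ) := by
  have hTm : Tm (lindbladOf H V)
      = ((n : ℂ) * m) • jumpMap V 1 + (n : ℂ) • jumpMap V (jumpMap V 1) := by
    rw [Tm]
    have := aux_sum_smul_Sm H V hV (Am (lindbladOf H V))
    rw [aux_Am_lindblad hn H V hV] at this ⊢
    exact this
  rw [val2, hTm, aux_trace_Gm_lindblad H V hV, aux_Am_lindblad hn H V hV]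
  have hc : 2 * (n:ℂ)^2 * m / (2 * n) = (n:ℂ) * m := by field_simp
  rw [hc, add_mul, Matrix.trace_add, Matrix.smul_mul, Matrix.smul_mul,
    Matrix.trace_smul, Matrix.trace_smul]
  field_simp
  simp only [smul_eq_mul]; ring

lemma aux_traceMul_eq (A ρ : Mat n) :
    Matrix.trace (A * ρ) = ∑ p, ∑ q, A p q * ρ q p := by
  simp [Matrix.trace, Matrix.diag, Matrix.mul_apply]

end AuxAlgebra

section AuxHS

attribute [local instance] Matrix.frobeniusSeminormedAddCommGroup
  Matrix.frobeniusNormedAddCommGroup Matrix.frobeniusNormedRing Matrix.frobeniusNormedSpace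

variable {n : ℕ}

lemma aux_trace_re_eq (x : Mat n) :
    (Matrix.trace (xᴴ * x)).re = ∑ i, ∑ j, ‖x i j‖ ^ 2 := by
  rw [Matrix.trace, Complex.re_sum, Finset.sum_comm]
  refine Finset.sum_congr rfl fun i _ => ?_
  rw [Matrix.diag_apply, Matrix.mul_apply, Complex.re_sum]
  refine Finset.sum_congr rfl fun j _ => ?_
  rw [Matrix.conjTranspose_apply, ← Complex.normSq_eq_norm_sq,
    Complex.star_def, ← Complex.normSq_eq_conj_mul_self]
  simp

lemma aux_hsNorm_eq (x : Mat n) : hsNorm x = ‖x‖ := by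
  have h : (Matrix.trace (xᴴ * x)).re = ∑ i, ∑ j, ‖x i j‖ ^ (2:ℝ) := by
    rw [aux_trace_re_eq]
    refine Finset.sum_congr rfl fun i _ => Finset.sum_congr rfl fun j _ => ?_
    rw [Real.rpow_two]
    try ring
  rw [hsNorm, h, Matrix.frobenius_norm_def, Real.sqrt_eq_rpow]

lemma aux_hs_nonneg (x : Mat n) : 0 ≤ hsNorm x := by
  rw [aux_hsNorm_eq]; exact norm_nonneg _

lemma aux_hs_sub_le (a b : Mat n) : hsNorm (a - b) ≤ hsNorm a + hsNorm b := by
  simp only [aux_hsNorm_eq]; exact norm_sub_le _ _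

lemma aux_hs_sub_rev (a b : Mat n) : hsNorm (a - b) = hsNorm (b - a) := by
  simp only [aux_hsNorm_eq]; exact norm_sub_rev _ _

lemma aux_hs_entry (M : Mat n) (p q : Fin n) : ‖M p q‖ ≤ hsNorm M := by
  rw [hsNorm]
  have h0 : ‖M p q‖ = Real.sqrt (‖M p q‖ ^ 2) := by
    rw [Real.sqrt_sq (norm_nonneg _)]
  rw [h0, aux_trace_re_eq]
  refine Real.sqrt_le_sqrt ?_
  calc ‖M p q‖ ^ 2 ≤ ∑ j, ‖M p j‖ ^ 2 :=
        Finset.single_le_sum (f := fun j => ‖M p j‖ ^ 2)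
          (fun j _ => by positivity) (Finset.mem_univ q)
    _ ≤ ∑ i, ∑ j, ‖M i j‖ ^ 2 :=
        Finset.single_le_sum (f := fun i => ∑ j, ‖M i j‖ ^ 2)
          (fun i _ => by positivity) (Finset.mem_univ p)

lemma aux_hs_EE (a b : Fin n) : hsNorm (single a b (1:ℂ)) = 1 := by
  rw [hsNorm, aux_EE_conjT, Matrix.single_mul_single_same, one_mul]
  have : Matrix.trace (single b b (1:ℂ)) = 1 := by
    simp [Matrix.trace, Matrix.diag, Matrix.single, Matrix.of_apply]
  rw [this]
  simp

lemma aux_hs_le_norm22 (L : Mat n → Mat n) (C : ℝ)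
    (hC : ∀ z : Mat n, hsNorm z ≤ 1 → hsNorm (L z) ≤ C)
    (x : Mat n) (hx : hsNorm x ≤ 1) : hsNorm (L x) ≤ norm22 L := by
  refine le_csSup ⟨C, ?_⟩ ⟨x, hx, rfl⟩
  rintro r ⟨z, hz, rfl⟩
  exact hC z hz

lemma aux_lind_bound {m : ℕ} (H : Mat n) (V : Fin m → Mat n) :
    ∀ z : Mat n, hsNorm z ≤ 1 →
      hsNorm (lindbladOf H V z) ≤ 2 * hsNorm H + ∑ i, 2 * hsNorm (V i) ^ 2 := by
  intro z hz
  simp only [aux_hsNorm_eq] at *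
  have hz0 : (0:ℝ) ≤ ‖z‖ := norm_nonneg _
  rw [lindbladOf]
  refine le_trans (norm_add_le _ _) (add_le_add ?_ ?_)
  · rw [norm_smul, Complex.norm_I, one_mul]
    calc ‖H * z - z * H‖ ≤ ‖H * z‖ + ‖z * H‖ := norm_sub_le _ _
      _ ≤ ‖H‖ * ‖z‖ + ‖z‖ * ‖H‖ := add_le_add (norm_mul_le _ _) (norm_mul_le _ _)
      _ ≤ ‖H‖ * 1 + 1 * ‖H‖ := by
          exact add_le_add (mul_le_mul_of_nonneg_left hz (norm_nonneg _))
            (mul_le_mul_of_nonneg_right hz (norm_nonneg _))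
      _ = 2 * ‖H‖ := by ring
  · refine le_trans (norm_sum_le _ _) (Finset.sum_le_sum fun i _ => ?_)
    have hV : ‖(V i)ᴴ‖ = ‖V i‖ := Matrix.frobenius_norm_conjTranspose _
    calc ‖(V i)ᴴ * z * V i - (2⁻¹:ℂ) • ((V i)ᴴ * V i * z + z * ((V i)ᴴ * V i))‖
        ≤ ‖(V i)ᴴ * z * V i‖ + ‖(2⁻¹:ℂ) • ((V i)ᴴ * V i * z + z * ((V i)ᴴ * V i))‖ :=
          norm_sub_le _ _
      _ ≤ ‖V i‖ * ‖z‖ * ‖V i‖ + 2⁻¹ * (‖V i‖ * ‖V i‖ * ‖z‖ + ‖z‖ * (‖V i‖ * ‖V i‖)) := by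
          refine add_le_add ?_ ?_
          · calc ‖(V i)ᴴ * z * V i‖ ≤ ‖(V i)ᴴ * z‖ * ‖V i‖ := norm_mul_le _ _
              _ ≤ ‖(V i)ᴴ‖ * ‖z‖ * ‖V i‖ :=
                  mul_le_mul_of_nonneg_right (norm_mul_le _ _) (norm_nonneg _)
              _ = ‖V i‖ * ‖z‖ * ‖V i‖ := by rw [hV]
          · rw [norm_smul]
            have h2 : ‖(2⁻¹:ℂ)‖ = 2⁻¹ := by
              rw [show (2⁻¹:ℂ) = ((2⁻¹:ℝ):ℂ) by norm_num, Complex.norm_real]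
              norm_num
            rw [h2]
            refine mul_le_mul_of_nonneg_left ?_ (by norm_num)
            refine le_trans (norm_add_le _ _) (add_le_add ?_ ?_)
            · calc ‖(V i)ᴴ * V i * z‖ ≤ ‖(V i)ᴴ * V i‖ * ‖z‖ := norm_mul_le _ _
                _ ≤ ‖(V i)ᴴ‖ * ‖V i‖ * ‖z‖ :=
                    mul_le_mul_of_nonneg_right (norm_mul_le _ _) (norm_nonneg _)
                _ = ‖V i‖ * ‖V i‖ * ‖z‖ := by rw [hV]
            · calc ‖z * ((V i)ᴴ * V i)‖ ≤ ‖z‖ * ‖(V i)ᴴ * V i‖ := norm_mul_le _ _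
                _ ≤ ‖z‖ * (‖(V i)ᴴ‖ * ‖V i‖) :=
                    mul_le_mul_of_nonneg_left (norm_mul_le _ _) (norm_nonneg _)
                _ = ‖z‖ * (‖V i‖ * ‖V i‖) := by rw [hV]
      _ ≤ ‖V i‖ * 1 * ‖V i‖ + 2⁻¹ * (‖V i‖ * ‖V i‖ * 1 + 1 * (‖V i‖ * ‖V i‖)) := by
          have hVn : (0:ℝ) ≤ ‖V i‖ := norm_nonneg _
          refine add_le_add ?_ ?_
          · exact mul_le_mul_of_nonneg_right (mul_le_mul_of_nonneg_left hz hVn) hVn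
          · refine mul_le_mul_of_nonneg_left (add_le_add ?_ ?_) (by norm_num)
            · exact mul_le_mul_of_nonneg_left hz (by positivity)
            · exact mul_le_mul_of_nonneg_right hz (by positivity)
      _ = 2 * ‖V i‖ ^ 2 := by ring

lemma aux_Sm_entry_diff (L L' : Mat n → Mat n) (δ : ℝ)
    (hδ : ∀ z : Mat n, hsNorm z ≤ 1 → hsNorm (L z - L' z) ≤ δ)
    (b d p q : Fin n) :
    ‖(Sm L b d - Sm L' b d) p q‖ ≤ 3 * n * δ := by
  have key : Sm L b d - Sm L' b d
      = ∑ a, (gradForm L (single a b 1) (single a d 1)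
          - gradForm L' (single a b 1) (single a d 1)) := by
    rw [Sm, Sm, Finset.sum_sub_distrib]
  have per : ∀ a : Fin n,
      hsNorm (gradForm L (single a b 1) (single a d 1)
        - gradForm L' (single a b 1) (single a d 1)) ≤ 3 * δ := by
    intro a
    have hmul : (single a b (1:ℂ))ᴴ * single a d 1
        = single b d 1 := by
      rw [aux_EE_conjT, Matrix.single_mul_single_same, one_mul]
    have hD : gradForm L (single a b 1) (single a d 1)
        - gradForm L' (single a b 1) (single a d 1)
        = (L (single b d 1) - L' (single b d 1))
          - (L (single b a 1) - L' (single b a 1)) * single a d 1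
          - single b a 1 *
              (L (single a d 1) - L' (single a d 1)) := by
      rw [gradForm, gradForm, hmul, aux_EE_conjT]
      simp only [sub_mul, mul_sub]
      abel
    rw [hD, aux_hsNorm_eq]
    have h1 : ‖L (single b d 1) - L' (single b d 1)‖ ≤ δ := by
      rw [← aux_hsNorm_eq]; exact hδ _ (le_of_eq (aux_hs_EE b d))
    have h2 : ‖(L (single b a 1) - L' (single b a 1)) * single a d 1‖
        ≤ δ := by
      refine le_trans (norm_mul_le _ _) ?_
      rw [← aux_hsNorm_eq, ← aux_hsNorm_eq, aux_hs_EE, mul_one]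
      exact hδ _ (le_of_eq (aux_hs_EE b a))
    have h3 : ‖single b a 1 *
        (L (single a d 1) - L' (single a d 1))‖ ≤ δ := by
      refine le_trans (norm_mul_le _ _) ?_
      rw [← aux_hsNorm_eq, ← aux_hsNorm_eq, aux_hs_EE, one_mul]
      exact hδ _ (le_of_eq (aux_hs_EE a d))
    calc ‖_ - _ - _‖ ≤ ‖_ - _‖ + ‖_‖ := norm_sub_le _ _
      _ ≤ (‖_‖ + ‖_‖) + ‖_‖ := add_le_add_left (norm_sub_le _ _) _
      _ ≤ (δ + δ) + δ := add_le_add (add_le_add h1 h2) h3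
      _ = 3 * δ := by ring
  refine le_trans (aux_hs_entry _ p q) ?_
  rw [key, aux_hsNorm_eq]
  refine le_trans (norm_sum_le _ _) ?_
  calc ∑ a : Fin n, ‖gradForm L (single a b 1) (single a d 1)
        - gradForm L' (single a b 1) (single a d 1)‖
      ≤ ∑ _a : Fin n, 3 * δ :=
        Finset.sum_le_sum fun a _ => by rw [← aux_hsNorm_eq]; exact per a
    _ = 3 * n * δ := by simp [Finset.sum_const]; ring

end AuxHS

/-- stability of `g²(0)` under perturbation of the generator. -/
theorem stmt19 (n m : ℕ) (H : Mat n) (hH : H.IsHermitian) (V : Fin m → Mat n)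
    (hV : StdJump V) (ρ : Mat n) (hρ : ρ.PosSemidef) (hρ1 : Matrix.trace ρ = 1)
    (h1 : 0 < (Matrix.trace (jumpMap V 1 * ρ)).re)
    (h2 : 0 < (Matrix.trace (jumpMap V (jumpMap V 1) * ρ)).re)
    (ε : ℝ) (hε : 0 < ε) :
    ∃ δ : ℝ, 0 < δ ∧ ∀ (m' : ℕ) (H' : Mat n), H'.IsHermitian →
      ∀ W : Fin m' → Mat n, StdJump W →
      norm22 (fun x => lindbladOf H V x - lindbladOf H' W x) ≤ δ →
      (1 - ε) * g2 V ρ ≤ g2 W ρ ∧ g2 W ρ ≤ (1 + ε) * g2 V ρ := by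
  classical
  -- n ≠ 0
  have hn0 : n ≠ 0 := by
    rintro rfl
    rw [show Matrix.trace (jumpMap V 1 * ρ) = 0 by
      simp [Matrix.trace, Finset.univ_eq_empty]] at h1
    simp at h1
  have hnc : (n:ℂ) ≠ 0 := Nat.cast_ne_zero.mpr hn0
  have hgV : 0 < g2 V ρ := div_pos h2 (by positivity)
  by_contra hcon
  have hseq : ∀ k : ℕ, ∃ m' : ℕ, ∃ H' : Mat n, H'.IsHermitian ∧
      ∃ W : Fin m' → Mat n, StdJump W ∧
      norm22 (fun x => lindbladOf H V x - lindbladOf H' W x) ≤ ((k:ℝ)+1)⁻¹ ∧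
      ¬((1 - ε) * g2 V ρ ≤ g2 W ρ ∧ g2 W ρ ≤ (1 + ε) * g2 V ρ) := by
    intro k
    by_contra hno
    push_neg at hno
    exact hcon ⟨((k:ℝ)+1)⁻¹, by positivity, hno⟩
  choose m' H' hH' W hW hnrm hbad using hseq
  -- uniform smallness of the difference on the unit ball
  have hdiff : ∀ k : ℕ, ∀ z : Mat n, hsNorm z ≤ 1 →
      hsNorm (lindbladOf (H' k) (W k) z - lindbladOf H V z) ≤ ((k:ℝ)+1)⁻¹ := by
    intro k z hz
    have hC : ∀ z : Mat n, hsNorm z ≤ 1 →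
        hsNorm (lindbladOf H V z - lindbladOf (H' k) (W k) z)
          ≤ (2 * hsNorm H + ∑ i, 2 * hsNorm (V i) ^ 2)
            + (2 * hsNorm (H' k) + ∑ i, 2 * hsNorm (W k i) ^ 2) := by
      intro w hw
      exact le_trans (aux_hs_sub_le _ _)
        (add_le_add (aux_lind_bound H V w hw) (aux_lind_bound (H' k) (W k) w hw))
    rw [aux_hs_sub_rev]
    exact le_trans
      (aux_hs_le_norm22 (fun x => lindbladOf H V x - lindbladOf (H' k) (W k) x) _ hC z hz)
      (hnrm k)
  -- entrywise convergence of the reconstruction data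
  have hzero : Filter.Tendsto (fun k : ℕ => 3*(n:ℝ)*((k:ℝ)+1)⁻¹) Filter.atTop (nhds 0) := by
    have h0 : Filter.Tendsto (fun k : ℕ => ((k:ℝ)+1)⁻¹) Filter.atTop (nhds 0) :=
      tendsto_inv_atTop_zero.comp
        (Filter.tendsto_atTop_add_const_right _ 1 tendsto_natCast_atTop_atTop)
    simpa using h0.const_mul (3*(n:ℝ))
  have hSm : ∀ b d p q : Fin n,
      Filter.Tendsto (fun k => Sm (lindbladOf (H' k) (W k)) b d p q) Filter.atTop
        (nhds (Sm (lindbladOf H V) b d p q)) := by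
    intro b d p q
    rw [← tendsto_sub_nhds_zero_iff]
    refine squeeze_zero_norm (fun k => ?_) hzero
    rw [← Matrix.sub_apply]
    exact aux_Sm_entry_diff (lindbladOf (H' k) (W k)) (lindbladOf H V)
      (((k:ℝ)+1)⁻¹) (hdiff k) b d p q
  have hGm : ∀ p q : Fin n,
      Filter.Tendsto (fun k => Gm (lindbladOf (H' k) (W k)) p q) Filter.atTop
        (nhds (Gm (lindbladOf H V) p q)) := by
    intro p q
    simp only [Gm, Matrix.sum_apply]
    exact tendsto_finset_sum _ (fun b _ => hSm b b p q)
  have htrG : Filter.Tendsto (fun k => Matrix.trace (Gm (lindbladOf (H' k) (W k))))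
      Filter.atTop (nhds (Matrix.trace (Gm (lindbladOf H V)))) := by
    simp only [Matrix.trace]
    exact tendsto_finset_sum _ (fun p _ => hGm p p)
  have hc : Filter.Tendsto
      (fun k => Matrix.trace (Gm (lindbladOf (H' k) (W k))) / (2*(n:ℂ)))
      Filter.atTop (nhds (Matrix.trace (Gm (lindbladOf H V)) / (2*(n:ℂ)))) :=
    htrG.div_const _
  have hAmE : ∀ (L' : Mat n → Mat n) (p q : Fin n),
      Am L' p q = (n:ℂ)⁻¹ * (Gm L' p q
        - Matrix.trace (Gm L') / (2*(n:ℂ)) * (1 : Mat n) p q) := by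
    intro L' p q
    rw [Am]
    simp [Matrix.smul_apply, Matrix.sub_apply, smul_eq_mul]
  have hAm : ∀ p q : Fin n,
      Filter.Tendsto (fun k => Am (lindbladOf (H' k) (W k)) p q) Filter.atTop
        (nhds (Am (lindbladOf H V) p q)) := by
    intro p q
    simp only [hAmE]
    exact ((hGm p q).sub (hc.mul_const _)).const_mul _
  have htr1 : Filter.Tendsto
      (fun k => Matrix.trace (Am (lindbladOf (H' k) (W k)) * ρ)) Filter.atTop
      (nhds (Matrix.trace (Am (lindbladOf H V) * ρ))) := by
    simp only [aux_traceMul_eq]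
    exact tendsto_finset_sum _ (fun p _ =>
      tendsto_finset_sum _ (fun q _ => (hAm p q).mul_const _))
  have hTmE : ∀ (L' : Mat n → Mat n) (p q : Fin n),
      Tm L' p q = ∑ b, ∑ d, Am L' b d * Sm L' b d p q := by
    intro L' p q
    rw [Tm]
    simp [Matrix.sum_apply, Matrix.smul_apply, smul_eq_mul]
  have htr2 : Filter.Tendsto
      (fun k => Matrix.trace (Tm (lindbladOf (H' k) (W k)) * ρ)) Filter.atTop
      (nhds (Matrix.trace (Tm (lindbladOf H V) * ρ))) := by
    simp only [aux_traceMul_eq, hTmE]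
    refine tendsto_finset_sum _ (fun p _ => tendsto_finset_sum _ (fun q _ => ?_))
    refine Filter.Tendsto.mul_const _ ?_
    exact tendsto_finset_sum _ (fun b _ => tendsto_finset_sum _ (fun d _ =>
      (hAm b d).mul (hSm b d p q)))
  have hv1 : Filter.Tendsto (fun k => val1 ρ (lindbladOf (H' k) (W k))) Filter.atTop
      (nhds (val1 ρ (lindbladOf H V))) := by
    simp only [val1]
    exact htr1
  have hv2 : Filter.Tendsto (fun k => val2 ρ (lindbladOf (H' k) (W k))) Filter.atTop
      (nhds (val2 ρ (lindbladOf H V))) := by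
    simp only [val2]
    exact ((htr2.sub (hc.mul htr1)).const_mul _)
  -- identification with g2
  have hg2k : ∀ k, g2 (W k) ρ
      = (val2 ρ (lindbladOf (H' k) (W k))).re
        / ((val1 ρ (lindbladOf (H' k) (W k))).re)^2 := by
    intro k
    rw [g2, aux_val1_lindblad hnc ρ (H' k) (W k) (hW k),
      aux_val2_lindblad hnc ρ (H' k) (W k) (hW k)]
  have hg2V : g2 V ρ
      = (val2 ρ (lindbladOf H V)).re / ((val1 ρ (lindbladOf H V)).re)^2 := by
    rw [g2, aux_val1_lindblad hnc ρ H V hV, aux_val2_lindblad hnc ρ H V hV]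
  have hre1 : Filter.Tendsto (fun k => (val1 ρ (lindbladOf (H' k) (W k))).re)
      Filter.atTop (nhds ((val1 ρ (lindbladOf H V)).re)) :=
    (Complex.continuous_re.tendsto _).comp hv1
  have hre2 : Filter.Tendsto (fun k => (val2 ρ (lindbladOf (H' k) (W k))).re)
      Filter.atTop (nhds ((val2 ρ (lindbladOf H V)).re)) :=
    (Complex.continuous_re.tendsto _).comp hv2
  have hden : ((val1 ρ (lindbladOf H V)).re)^2 ≠ 0 := by
    rw [aux_val1_lindblad hnc ρ H V hV]
    exact pow_ne_zero _ (ne_of_gt h1)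
  have htendg : Filter.Tendsto (fun k => g2 (W k) ρ) Filter.atTop (nhds (g2 V ρ)) := by
    simp only [hg2k]
    rw [hg2V]
    exact Filter.Tendsto.div hre2 (hre1.pow 2) hden
  have hmem : ∀ᶠ k in Filter.atTop,
      g2 (W k) ρ ∈ Set.Ioo ((1-ε) * g2 V ρ) ((1+ε) * g2 V ρ) := by
    refine htendg (Ioo_mem_nhds ?_ ?_)
    · nlinarith
    · nlinarith
  obtain ⟨k, hk⟩ := hmem.exists
  exact hbad k ⟨le_of_lt hk.1, le_of_lt hk.2⟩
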